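/- arXiv:2511.04246 — 3 statements merged into one kernel-verified Lean document; each statement's English description precedes it below -/
import Mathlib

section
/- Let r : ℝ → ℝ be a positive, twice continuously differentiable function on an open interval I satisfying r(φ)² + 2·r'(φ)² − r''(φ)·r(φ) = 0 for all φ ∈ I. Then there exist constants A > 0 and B ∈ ℝ such that r(φ) = A / cos(φ − B) for all φ ∈ I (in particular cos(φ − B) > 0 on I). -/
/-!
Substituting `u = 1 / r` turns the equation into `u'' + u = 0`, whose solutions on an interval are
`R cos (φ - B)`. Positivity of `r` then forces `R > 0` and `cos (φ - B) > 0`, and `A = 1 / R`.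
-/

open Real

open Complex in
theorem exists_eq_mul_cos_sub_of_hasDerivAt_neg {s : Set ℝ} (hs : IsOpen s)
    (hs' : IsPreconnected s) {u u' : ℝ → ℝ} (hu : ∀ x ∈ s, HasDerivAt u (u' x) x)
    (hu' : ∀ x ∈ s, HasDerivAt u' (-u x) x) :
    ∃ R B : ℝ, 0 ≤ R ∧ ∀ x ∈ s, u x = R * Real.cos (x - B) := by
  -- `(u + i u') e^{ix}` is a first integral of `u'' = -u`.
  have hw : ∀ x ∈ s, HasDerivAt (fun y : ℝ => (u y + u' y * I) * exp (y * I)) 0 x := by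
    intro x hx
    have hexp : HasDerivAt (fun y : ℝ => exp (y * I)) (exp (x * I) * I) x := by
      simpa using ((hasDerivAt_id x).ofReal_comp.mul_const I).cexp
    refine (((hu x hx).ofReal_comp.fun_add ((hu' x hx).ofReal_comp.mul_const I)).fun_mul
      hexp).congr_deriv ?_
    push_cast
    linear_combination (u' x : ℂ) * exp (x * I) * I_sq
  obtain ⟨c, hc⟩ := hs.exists_is_const_of_deriv_eq_zero hs'
    (fun x hx => (hw x hx).differentiableAt.differentiableWithinAt)
    (fun x hx => (hw x hx).deriv)
  refine ⟨‖c‖, arg c, norm_nonneg c, fun x hx => ?_⟩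
  have hux : (u x : ℂ) + u' x * I = ‖c‖ * exp ((arg c - x : ℝ) * I) := by
    calc (u x : ℂ) + u' x * I = c * exp (-(x * I)) := by
          rw [← hc x hx, mul_assoc, ← Complex.exp_add, add_neg_cancel, Complex.exp_zero, mul_one]
      _ = ‖c‖ * exp ((arg c - x : ℝ) * I) := by
          conv_lhs => rw [← norm_mul_exp_arg_mul_I c, mul_assoc, ← Complex.exp_add]
          push_cast
          ring_nf
  have hre := congrArg re hux
  rwa [add_re, ofReal_re, mul_I_re, ofReal_im, neg_zero, add_zero, re_ofReal_mul,
    exp_ofReal_mul_I_re, ← Real.cos_neg, neg_sub] at hre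

theorem hasDerivAt_neg_div_sq_of_flat {r r' r'' : ℝ → ℝ} {x : ℝ} (hx : r x ≠ 0)
    (hr : HasDerivAt r (r' x) x) (hr' : HasDerivAt r' (r'' x) x)
    (hode : r x ^ 2 + 2 * r' x ^ 2 - r'' x * r x = 0) :
    HasDerivAt (fun y => -r' y / r y ^ 2) (-(r x)⁻¹) x := by
  refine (hr'.fun_neg.fun_div (hr.fun_pow 2) (pow_ne_zero 2 hx)).congr_deriv ?_
  field_simp
  norm_num
  linear_combination r x * hode

theorem flat_ode_characterization (a b : ℝ) (r : ℝ → ℝ)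
    (hr : ContDiffOn ℝ 2 r (Set.Ioo a b))
    (hpos : ∀ φ ∈ Set.Ioo a b, 0 < r φ)
    (hode : ∀ φ ∈ Set.Ioo a b,
      r φ ^ 2 + 2 * (deriv r φ) ^ 2 - deriv (deriv r) φ * r φ = 0) :
    ∃ A B : ℝ, 0 < A ∧ ∀ φ ∈ Set.Ioo a b,
      0 < Real.cos (φ - B) ∧ r φ = A / Real.cos (φ - B) := by
  have hs : IsOpen (Set.Ioo a b) := isOpen_Ioo
  have hr' : ContDiffOn ℝ 1 (deriv r) (Set.Ioo a b) := hr.deriv_of_isOpen hs le_rfl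
  have hd1 : ∀ x ∈ Set.Ioo a b, HasDerivAt r (deriv r x) x := fun x hx =>
    ((hr.differentiableOn two_ne_zero).differentiableAt (hs.mem_nhds hx)).hasDerivAt
  have hd2 : ∀ x ∈ Set.Ioo a b, HasDerivAt (deriv r) (deriv (deriv r) x) x := fun x hx =>
    ((hr'.differentiableOn one_ne_zero).differentiableAt (hs.mem_nhds hx)).hasDerivAt
  obtain ⟨R, B, hR, hu⟩ := exists_eq_mul_cos_sub_of_hasDerivAt_neg hs isPreconnected_Ioo
    (u := fun x => (r x)⁻¹) (u' := fun x => -deriv r x / r x ^ 2)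
    (fun x hx => (hd1 x hx).inv (hpos x hx).ne')
    (fun x hx => hasDerivAt_neg_div_sq_of_flat (hpos x hx).ne' (hd1 x hx) (hd2 x hx) (hode x hx))
  rcases hR.eq_or_lt with rfl | hR
  · refine ⟨1, 0, one_pos, fun φ hφ => absurd (hu φ hφ) ?_⟩
    simpa using (hpos φ hφ).ne'
  refine ⟨R⁻¹, B, inv_pos.2 hR, fun φ hφ => ?_⟩
  have hcos : 0 < cos (φ - B) := pos_of_mul_pos_right (hu φ hφ ▸ inv_pos.2 (hpos φ hφ)) hR.le
  refine ⟨hcos, ?_⟩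
  rw [← inv_inv (r φ), hu φ hφ, mul_inv, div_eq_mul_inv]
end

section
/- Let β > 0 and let (x, y, θ, d) be smooth functions satisfying ẋ = −β²/(β²+d²)·sin(θ)·ũ_y, ẏ = β²/(β²+d²)·cos(θ)·ũ_y, θ̇ = d/(β²+d²)·ũ_y, with ũ_y(t) > 0. Then for all t, d(t) = β² · (ẋ·ÿ − ẍ·ẏ) / (ẋ² + ẏ²)^{3/2}. -/
open Real

theorem rect_slider_flat_offset (β : ℝ) (hβ : 0 < β)
    (x y θ d uy : ℝ → ℝ)
    (hx : ContDiff ℝ (⊤ : ℕ∞) x) (hy : ContDiff ℝ (⊤ : ℕ∞) y) (hθ : ContDiff ℝ (⊤ : ℕ∞) θ)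
    (hd : ContDiff ℝ (⊤ : ℕ∞) d) (huy : ContDiff ℝ (⊤ : ℕ∞) uy)
    (hxe : ∀ t, deriv x t = -(β ^ 2 / (β ^ 2 + d t ^ 2)) * Real.sin (θ t) * uy t)
    (hye : ∀ t, deriv y t = β ^ 2 / (β ^ 2 + d t ^ 2) * Real.cos (θ t) * uy t)
    (hθe : ∀ t, deriv θ t = d t / (β ^ 2 + d t ^ 2) * uy t)
    (huyp : ∀ t, 0 < uy t) :
    ∀ t, d t = β ^ 2 * (deriv x t * deriv (deriv y) t - deriv (deriv x) t * deriv y t) /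
      ((deriv x t) ^ 2 + (deriv y t) ^ 2) ^ ((3 : ℝ) / 2) := by
  intro t
  set P : ℝ → ℝ := fun s => β ^ 2 / (β ^ 2 + d s ^ 2) * uy s with hPdef
  have hd1 : Differentiable ℝ d := hd.differentiable (by simp)
  have hθ1 : Differentiable ℝ θ := hθ.differentiable (by simp)
  have huy1 : Differentiable ℝ uy := huy.differentiable (by simp)
  have hden : ∀ s, (0:ℝ) < β ^ 2 + d s ^ 2 := fun s =>
    add_pos_of_pos_of_nonneg (pow_pos hβ 2) (sq_nonneg _)
  have hPpos : ∀ s, 0 < P s := fun s =>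
    mul_pos (div_pos (pow_pos hβ 2) (hden s)) (huyp s)
  have hPdiff : Differentiable ℝ P := by
    apply Differentiable.mul _ huy1
    exact (differentiable_const _).div
      ((differentiable_const _).add (hd1.pow 2)) (fun s => (hden s).ne')
  -- first derivatives as functions of P and θ
  have hx' : deriv x = fun s => -(P s * Real.sin (θ s)) := by
    funext s; rw [hxe s]; simp [hPdef]; ring
  have hy' : deriv y = fun s => P s * Real.cos (θ s) := by
    funext s; rw [hye s]; simp [hPdef]; ring
  -- second derivatives
  have hsin : HasDerivAt (fun s => Real.sin (θ s)) (Real.cos (θ t) * deriv θ t) t :=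
    (Real.hasDerivAt_sin (θ t)).comp t (hθ1 t).hasDerivAt
  have hcos : HasDerivAt (fun s => Real.cos (θ s)) (-Real.sin (θ t) * deriv θ t) t :=
    (Real.hasDerivAt_cos (θ t)).comp t (hθ1 t).hasDerivAt
  have hx2 : deriv (deriv x) t =
      -(deriv P t * Real.sin (θ t) + P t * (Real.cos (θ t) * deriv θ t)) := by
    rw [hx']
    exact (((hPdiff t).hasDerivAt.mul hsin).neg).deriv
  have hy2 : deriv (deriv y) t =
      deriv P t * Real.cos (θ t) + P t * (-Real.sin (θ t) * deriv θ t) := by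
    rw [hy']
    exact ((hPdiff t).hasDerivAt.mul hcos).deriv
  have hpyth := Real.sin_sq_add_cos_sq (θ t)
  have hnum : deriv x t * deriv (deriv y) t - deriv (deriv x) t * deriv y t
      = P t ^ 2 * deriv θ t := by
    rw [hx2, hy2, hx', hy']
    beta_reduce
    linear_combination P t ^ 2 * deriv θ t * hpyth
  have hsum : (deriv x t) ^ 2 + (deriv y t) ^ 2 = P t ^ 2 := by
    rw [hx', hy']; beta_reduce; linear_combination P t ^ 2 * hpyth
  have hpow : ((P t ^ 2 : ℝ)) ^ ((3:ℝ)/2) = P t ^ 3 := by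
    rw [← Real.rpow_natCast (P t) 2, ← Real.rpow_mul (hPpos t).le,
      show ((2:ℕ):ℝ) * ((3:ℝ)/2) = ((3:ℕ):ℝ) by norm_num, Real.rpow_natCast]
  rw [hnum, hsum, hpow, hθe t]
  have h1 : P t ≠ 0 := (hPpos t).ne'
  have h2 : (β ^ 2 + d t ^ 2) ≠ 0 := (hden t).ne'
  have h3 : uy t ≠ 0 := (huyp t).ne'
  field_simp [hPdef]
  have hP : P t * (β ^ 2 + d t ^ 2) = β ^ 2 * uy t := by
    show β ^ 2 / (β ^ 2 + d t ^ 2) * uy t * (β ^ 2 + d t ^ 2) = β ^ 2 * uy t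
    field_simp
  linear_combination d t * hP
end

section
/- Let β > 0 and let (x, y, θ, d) be smooth functions satisfying the rectangular slider model ẋ = −β²/(β²+d²)·sin(θ)·ũ_y, ẏ = β²/(β²+d²)·cos(θ)·ũ_y, θ̇ = d/(β²+d²)·ũ_y with ũ_y > 0. Then ũ_y = (1 + β²·(ẋÿ − ẍẏ)²/(ẋ²+ẏ²)³) · √(ẋ²+ẏ²). -/
open Real

theorem rect_slider_flat_input (β : ℝ) (hβ : 0 < β)
    (x y θ d uy : ℝ → ℝ)
    (hx : ContDiff ℝ (⊤ : ℕ∞) x) (hy : ContDiff ℝ (⊤ : ℕ∞) y) (hθ : ContDiff ℝ (⊤ : ℕ∞) θ)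
    (hd : ContDiff ℝ (⊤ : ℕ∞) d) (huy : ContDiff ℝ (⊤ : ℕ∞) uy)
    (hxe : ∀ t, deriv x t = -(β ^ 2 / (β ^ 2 + d t ^ 2)) * Real.sin (θ t) * uy t)
    (hye : ∀ t, deriv y t = β ^ 2 / (β ^ 2 + d t ^ 2) * Real.cos (θ t) * uy t)
    (hθe : ∀ t, deriv θ t = d t / (β ^ 2 + d t ^ 2) * uy t)
    (huyp : ∀ t, 0 < uy t) :
    ∀ t, uy t =
      (1 + β ^ 2 * (deriv x t * deriv (deriv y) t - deriv (deriv x) t * deriv y t) ^ 2 /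
        ((deriv x t) ^ 2 + (deriv y t) ^ 2) ^ 3) *
        Real.sqrt ((deriv x t) ^ 2 + (deriv y t) ^ 2) := by
  intro t
  have hd' : HasDerivAt d (deriv d t) t :=
    ((hd.differentiable (by simp)) t).hasDerivAt
  have hθ' : HasDerivAt θ (deriv θ t) t :=
    ((hθ.differentiable (by simp)) t).hasDerivAt
  have hu' : HasDerivAt uy (deriv uy t) t :=
    ((huy.differentiable (by simp)) t).hasDerivAt
  set dt := d t with hdt
  set ut := uy t with hut
  set θt := θ t with hθt
  set d1 := deriv d t with hd1
  set θ1 := deriv θ t with hθ1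
  set u1 := deriv uy t with hu1
  have hDpos : 0 < β ^ 2 + dt ^ 2 := by positivity
  have hDne : (β ^ 2 + dt ^ 2) ≠ 0 := ne_of_gt hDpos
  set D := β ^ 2 + dt ^ 2 with hD
  -- derivative of the denominator
  have hden : HasDerivAt (fun s => β ^ 2 + d s ^ 2) (0 + 2 * dt ^ 1 * d1) t :=
    (hasDerivAt_const t (β ^ 2)).add (hd'.pow 2)
  have hk : HasDerivAt (fun s => β ^ 2 / (β ^ 2 + d s ^ 2))
      ((0 * D - β ^ 2 * (0 + 2 * dt ^ 1 * d1)) / D ^ 2) t :=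
    (hasDerivAt_const t (β ^ 2)).div hden hDne
  have hsin : HasDerivAt (fun s => Real.sin (θ s)) (Real.cos θt * θ1) t := hθ'.sin
  have hcos : HasDerivAt (fun s => Real.cos (θ s)) (-Real.sin θt * θ1) t := hθ'.cos
  -- second derivative of x
  have hxd : HasDerivAt (fun s => -(β ^ 2 / (β ^ 2 + d s ^ 2)) * Real.sin (θ s) * uy s)
      ((-((0 * D - β ^ 2 * (0 + 2 * dt ^ 1 * d1)) / D ^ 2) * Real.sin θt +
        -(β ^ 2 / D) * (Real.cos θt * θ1)) * ut +
        -(β ^ 2 / D) * Real.sin θt * u1) t :=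
    (hk.neg.mul hsin).mul hu'
  have hyd : HasDerivAt (fun s => β ^ 2 / (β ^ 2 + d s ^ 2) * Real.cos (θ s) * uy s)
      (((0 * D - β ^ 2 * (0 + 2 * dt ^ 1 * d1)) / D ^ 2 * Real.cos θt +
        β ^ 2 / D * (-Real.sin θt * θ1)) * ut +
        β ^ 2 / D * Real.cos θt * u1) t :=
    (hk.mul hcos).mul hu'
  have hxx : deriv (deriv x) t =
      (-((0 * D - β ^ 2 * (0 + 2 * dt ^ 1 * d1)) / D ^ 2) * Real.sin θt +
        -(β ^ 2 / D) * (Real.cos θt * θ1)) * ut +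
        -(β ^ 2 / D) * Real.sin θt * u1 := by
    have h : deriv x = fun s => -(β ^ 2 / (β ^ 2 + d s ^ 2)) * Real.sin (θ s) * uy s :=
      funext hxe
    rw [h]; exact hxd.deriv
  have hyy : deriv (deriv y) t =
      ((0 * D - β ^ 2 * (0 + 2 * dt ^ 1 * d1)) / D ^ 2 * Real.cos θt +
        β ^ 2 / D * (-Real.sin θt * θ1)) * ut +
        β ^ 2 / D * Real.cos θt * u1 := by
    have h : deriv y = fun s => β ^ 2 / (β ^ 2 + d s ^ 2) * Real.cos (θ s) * uy s :=
      funext hye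
    rw [h]; exact hyd.deriv
  have hpy : Real.sin θt ^ 2 + Real.cos θt ^ 2 = 1 := Real.sin_sq_add_cos_sq θt
  have hupos : 0 < ut := huyp t
  have hkpos : 0 < β ^ 2 / D * ut := by positivity
  -- speed squared
  have hS : (deriv x t) ^ 2 + (deriv y t) ^ 2 = (β ^ 2 / D * ut) ^ 2 := by
    rw [hxe t, hye t]
    linear_combination (β ^ 2 / D * ut) ^ 2 * hpy
  -- cross term
  have hW : deriv x t * deriv (deriv y) t - deriv (deriv x) t * deriv y t =
      (β ^ 2 / D * ut) ^ 2 * θ1 := by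
    rw [hxe t, hye t, hxx, hyy]
    linear_combination (β ^ 2 / D * ut) ^ 2 * θ1 * hpy
  rw [hS, hW, Real.sqrt_sq hkpos.le, hθ1, hθe t]
  have hβne : β ≠ 0 := ne_of_gt hβ
  have hune : ut ≠ 0 := ne_of_gt hupos
  field_simp
  ring
end
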